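/- arXiv:2303.00649 — 2 statements merged into one kernel-verified Lean document; each statement's English description precedes it below -/
import Mathlib

section
/- Let X be a metric space, γ_i:[0,1]→X a sequence of rectifiable curves parametrized by constant speed with Len(γ_i) ≤ L for some L ∈ [0,∞], converging uniformly to a curve γ:[0,1]→X. Then for every lower semicontinuous function g:X→[0,∞], one has ∫_γ g ds ≤ liminf_{i→∞} ∫_{γ_i} g ds. -/
open MeasureTheory Metric Set ENNReal NNReal Filter

noncomputable section

variable {X : Type*} [MetricSpace X] [MeasurableSpace X]

/-- The length of a curve `γ : [0,1] → X`. -/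
def curveLen (γ : ℝ → X) : ℝ≥0∞ := eVariationOn γ (Set.Icc 0 1)

/-- A curve is a continuous map on `[0,1]`. -/
def IsCurve (γ : ℝ → X) : Prop := ContinuousOn γ (Set.Icc 0 1)

/-- A rectifiable curve: continuous with finite length. -/
def IsRectCurve (γ : ℝ → X) : Prop := IsCurve γ ∧ curveLen γ < ⊤

/-- Constant speed parametrization on `[0,1]`: the metric speed equals the length a.e. -/
def IsConstSpeed (γ : ℝ → X) : Prop :=
  HasConstantSpeedOnWith γ (Set.Icc 0 1) (curveLen γ).toNNReal

/-- The path (arc-length) integral `∫_γ g ds` of `g : X → [0,∞]` along a curve `γ`,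
computed through the arc-length (natural) parametrization. -/
def pathIntegral (g : X → ℝ≥0∞) (γ : ℝ → X) : ℝ≥0∞ :=
  ∫⁻ s in Set.Icc (0:ℝ) (curveLen γ).toReal,
    g (naturalParameterization γ (Set.Icc 0 1) 0 s)

/-- `g` is an upper gradient of `f` on the set `A`. -/
def IsUpperGradientOn (g : X → ℝ≥0∞) (f : X → ℝ) (A : Set X) : Prop :=
  ∀ γ : ℝ → X, IsRectCurve γ → (∀ t ∈ Set.Icc (0:ℝ) 1, γ t ∈ A) →
    ENNReal.ofReal |f (γ 1) - f (γ 0)| ≤ pathIntegral g γ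

/-- `g` is an upper gradient of `f`. -/
def IsUpperGradient (g : X → ℝ≥0∞) (f : X → ℝ) : Prop :=
  IsUpperGradientOn g f Set.univ

/-- Membership in the Newtonian space `N^{1,p}(X)`. -/
def MemN1p (p : ℝ) (μ : Measure X) (f : X → ℝ) : Prop :=
  MemLp f (ENNReal.ofReal p) μ ∧
    ∃ g : X → ℝ≥0∞, IsUpperGradient g f ∧ ∫⁻ x, g x ^ p ∂μ < ⊤

/-- `‖f‖_{N^{1,p}}^p` as an extended real: `‖f‖_p^p + inf over upper gradients of ‖g‖_p^p`. -/
def N1pEnorm (p : ℝ) (μ : Measure X) (f : X → ℝ) : ℝ≥0∞ :=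
  (∫⁻ x, ENNReal.ofReal |f x| ^ p ∂μ) +
    ⨅ (g : X → ℝ≥0∞) (_ : IsUpperGradient g f), ∫⁻ x, g x ^ p ∂μ

/-- The Sobolev capacity `Cap_p(E)`. -/
def sobCap (p : ℝ) (μ : Measure X) (E : Set X) : ℝ≥0∞ :=
  ⨅ (u : X → ℝ) (_ : MemN1p p μ u ∧ ∀ x ∈ E, 1 ≤ u x), N1pEnorm p μ u

/-- The `p`-modulus of a curve family. -/
def pModulus (p : ℝ) (μ : Measure X) (Γ : Set (ℝ → X)) : ℝ≥0∞ :=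
  ⨅ (ρ : X → ℝ≥0∞) (_ : Measurable ρ ∧ ∀ γ ∈ Γ, 1 ≤ pathIntegral ρ γ),
    ∫⁻ x, ρ x ^ p ∂μ

/-- `g` is a `p`-weak upper gradient of `f`. -/
def IsWeakUpperGradient (p : ℝ) (μ : Measure X) (g : X → ℝ≥0∞) (f : X → ℝ) : Prop :=
  ∃ Γ₀ : Set (ℝ → X), pModulus p μ Γ₀ = 0 ∧
    ∀ γ : ℝ → X, IsRectCurve γ → γ ∉ Γ₀ →
      ENNReal.ofReal |f (γ 1) - f (γ 0)| ≤ pathIntegral g γ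

/-- Every sequence in `S` has a subsequence converging uniformly on `[0,1]`. -/
def UnifConvSubseq (S : Set (ℝ → X)) : Prop :=
  ∀ γs : ℕ → (ℝ → X), (∀ i, γs i ∈ S) →
    ∃ φ : ℕ → ℕ, StrictMono φ ∧ ∃ γ : ℝ → X,
      TendstoUniformlyOn (fun n => γs (φ n)) γ Filter.atTop (Set.Icc 0 1)

/-- A good function in the sense of the paper: for any family of rectifiable curves,
bounded Borel set `A`, and `δ, L > 0`, the subfamily of constant-speed curves contained in `A`,
with `∫_γ g ≤ L` and `diam(γ) ≥ δ`, is precompact for uniform convergence. -/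
def GoodFunction (g : X → ℝ≥0∞) : Prop :=
  ∀ (Γ : Set (ℝ → X)) (A : Set X), (∀ γ ∈ Γ, IsRectCurve γ) →
    Bornology.IsBounded A → MeasurableSet A → ∀ δ L : ℝ, 0 < δ → 0 < L →
    UnifConvSubseq {γ | γ ∈ Γ ∧ IsConstSpeed γ ∧ (∀ t ∈ Set.Icc (0:ℝ) 1, γ t ∈ A) ∧
      pathIntegral g γ ≤ ENNReal.ofReal L ∧ δ ≤ Metric.diam (γ '' Set.Icc 0 1)}

/-- Length of the discrete path `(p 0, …, p n)`. -/
def dLen (p : ℕ → X) (n : ℕ) : ℝ := ∑ k ∈ Finset.range n, dist (p k) (p (k+1))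

/-- Mesh of the discrete path `(p 0, …, p n)`. -/
def dMesh (p : ℕ → X) (n : ℕ) : ℝ :=
  (((Finset.range n).sup fun k => nndist (p k) (p (k+1))) : ℝ≥0)

/-- Time-partition points of the discrete path `(p 0, …, p n)`. -/
def tPt (p : ℕ → X) (n : ℕ) (l : ℕ) : ℝ :=
  (∑ k ∈ Finset.range l, dist (p k) (p (k+1))) / dLen p n

/-- The value `h(p 0) + ∑ g(p k) d(p k, p (k+1))` of a discrete path. -/
def dPathVal (g h : X → ℝ) (n : ℕ) (p : ℕ → X) : ℝ :=
  h (p 0) + ∑ k ∈ Finset.range n, g (p k) * dist (p k) (p (k+1))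

/-- Admissible discrete paths from `E` to `y` of mesh at most `δ` (non-repeating). -/
def dAdm (E : Set X) (δ : ℝ) (y : X) (n : ℕ) (p : ℕ → X) : Prop :=
  p 0 ∈ E ∧ p n = y ∧ (∀ k ≤ n, ∀ l ≤ n, p k = p l → k = l) ∧
    ∀ k < n, dist (p k) (p (k+1)) ≤ δ

/-- `f(y) = min(inf over admissible discrete paths of h(p₀) + ∑ g(p_k)d(p_k,p_{k+1}), M)`. -/
def dInfFun (E : Set X) (δ M : ℝ) (g h : X → ℝ) (y : X) : ℝ :=
  sInf (insert M {v : ℝ | ∃ (n : ℕ) (p : ℕ → X), dAdm E δ y n p ∧ v = dPathVal g h n p})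

/-- The function `u(x) = min(inf {∫_γ g ds : γ from X∖V to x}, 1)`. -/
def minCurveFun (V : Set X) (g : X → ℝ≥0∞) (x : X) : ℝ :=
  (min 1 (⨅ (γ : ℝ → X) (_ : IsRectCurve γ ∧ γ 0 ∉ V ∧ γ 1 = x),
    pathIntegral g γ)).toReal

/-- Condenser capacity `Cap_p(E,F)`. -/
def condCap (p : ℝ) (μ : Measure X) (E F : Set X) : ℝ≥0∞ :=
  ⨅ (u : X → ℝ) (g : X → ℝ≥0∞)
    (_ : IsUpperGradient g u ∧ (∀ x ∈ E, u x = 0) ∧ (∀ x ∈ F, u x = 1)),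
    ∫⁻ x, g x ^ p ∂μ

/-- Condenser capacity computed with Lipschitz admissible functions. -/
def condCapLip (p : ℝ) (μ : Measure X) (E F : Set X) : ℝ≥0∞ :=
  ⨅ (u : X → ℝ) (g : X → ℝ≥0∞)
    (_ : (∃ K : ℝ≥0, LipschitzWith K u) ∧ IsUpperGradient g u ∧
      (∀ x ∈ E, u x = 0) ∧ (∀ x ∈ F, u x = 1)),
    ∫⁻ x, g x ^ p ∂μ

/-- Membership in the Newtonian space `N^{1,p}(U)` of an open subset `U`. -/
def MemN1pOn (p : ℝ) (μ : Measure X) (f : X → ℝ) (U : Set X) : Prop :=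
  MemLp f (ENNReal.ofReal p) (μ.restrict U) ∧
    ∃ g : X → ℝ≥0∞, IsUpperGradientOn g f U ∧ ∫⁻ x in U, g x ^ p ∂μ < ⊤

/-- `‖f‖_{N^{1,p}(U)}^p` for an open subset `U`. -/
def N1pEnormOn (p : ℝ) (μ : Measure X) (f : X → ℝ) (U : Set X) : ℝ≥0∞ :=
  (∫⁻ x in U, ENNReal.ofReal |f x| ^ p ∂μ) +
    ⨅ (g : X → ℝ≥0∞) (_ : IsUpperGradientOn g f U), ∫⁻ x in U, g x ^ p ∂μ

end

/-- A metric space is locally complete if every point has a complete neighborhood. -/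
def LocallyCompleteSpace (Y : Type*) [MetricSpace Y] : Prop :=
  ∀ y : Y, ∃ U ∈ nhds y, IsComplete U

/-!
Let `L` be the liminf of the lengths `Len(γᵢ)` and `A = ∫₀¹ g(γ t) dt`. For a constant-speed curve
`∫_{γᵢ} g ds = Len(γᵢ) ∫₀¹ g(γᵢ t) dt`, and Fatou's lemma together with the lower semicontinuity of
`g` gives `A ≤ liminf ∫₀¹ g(γᵢ t) dt`, hence `L * A ≤ liminf ∫_{γᵢ} g ds`.

Each `γᵢ` is `Len(γᵢ)`-Lipschitz, so the uniform limit `γ` is `L`-Lipschitz. Then the length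
function `σ(t) = Len(γ|[0,t])` is `L`-Lipschitz as well, and since `σ` maps `[0,1]` onto
`[0, Len γ]` and the arc-length parametrization composed with `σ` is `γ`, the Lipschitz bound
`|σ(E)| ≤ L |E|` gives `∫_γ g ds ≤ L * A`. If `L = ∞` only `A = 0` needs an argument: then
`g ∘ γ` vanishes on all of `[0,1]` by lower semicontinuity, hence so does `g` along the
arc-length parametrization.
-/

open Topology

theorem HasConstantSpeedOnWith.lipschitzOnWith {E : Type*} [PseudoEMetricSpace E] {f : ℝ → E}
    {s : Set ℝ} {l : ℝ≥0} (h : HasConstantSpeedOnWith f s l) : LipschitzOnWith l f s := by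
  intro x hx y hy
  wlog hxy : x ≤ y generalizing x y
  · rw [edist_comm, edist_comm x]
    exact this hy hx (le_of_not_ge hxy)
  calc edist (f x) (f y) ≤ eVariationOn f (s ∩ Icc x y) :=
        eVariationOn.edist_le f ⟨hx, le_rfl, hxy⟩ ⟨hy, hxy, le_rfl⟩
    _ = ENNReal.ofReal (l * (y - x)) := h hx hy
    _ = l * edist x y := by
        rw [edist_dist, Real.dist_eq, abs_sub_comm, abs_of_nonneg (sub_nonneg.2 hxy),
          ENNReal.ofReal_mul l.coe_nonneg, ofReal_coe_nnreal]

theorem LipschitzOnWith.eVariationOn_inter_Icc_le {E : Type*} [PseudoEMetricSpace E]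
    {f : ℝ → E} {s : Set ℝ} {C : ℝ≥0} (hf : LipschitzOnWith C f s) {x y : ℝ} (hx : x ∈ s)
    (hy : y ∈ s) : eVariationOn f (s ∩ Icc x y) ≤ C * ENNReal.ofReal (y - x) :=
  calc eVariationOn (f ∘ id) (s ∩ Icc x y) ≤ C * eVariationOn id (s ∩ Icc x y) :=
        (hf.mono inter_subset_left).comp_eVariationOn_le (mapsTo_id _)
    _ ≤ C * ENNReal.ofReal (y - x) := by
        gcongr
        exact ((monotone_id.monotoneOn s).eVariationOn_eq hx hy).le

theorem LipschitzOnWith.lipschitzOnWith_variationOnFromTo {E : Type*} [PseudoEMetricSpace E]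
    {f : ℝ → E} {s : Set ℝ} {C : ℝ≥0} (hf : LipschitzOnWith C f s) {a : ℝ} (ha : a ∈ s) :
    LipschitzOnWith C (variationOnFromTo f s a) s := by
  have hbv : LocallyBoundedVariationOn f s := fun x y hx hy =>
    ne_top_of_le_ne_top (mul_ne_top coe_ne_top ofReal_ne_top)
      (hf.eVariationOn_inter_Icc_le hx hy)
  refine LipschitzOnWith.of_dist_le_mul fun x hx y hy => ?_
  wlog hxy : x ≤ y generalizing x y
  · rw [dist_comm, dist_comm x]
    exact this y hy x hx (le_of_not_ge hxy)
  rw [Real.dist_eq, Real.dist_eq, abs_sub_comm x, abs_of_nonneg (sub_nonneg.2 hxy),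
    abs_sub_comm, abs_of_nonneg (sub_nonneg.2 (variationOnFromTo.monotoneOn hbv ha hx hy hxy)),
    ← variationOnFromTo.add hbv ha hx hy, add_sub_cancel_left, variationOnFromTo.eq_of_le _ _ hxy]
  have := ENNReal.toReal_mono (mul_ne_top coe_ne_top ofReal_ne_top)
    (hf.eVariationOn_inter_Icc_le hx hy)
  rwa [ENNReal.toReal_mul, ENNReal.coe_toReal, ENNReal.toReal_ofReal (sub_nonneg.2 hxy)] at this

theorem BoundedVariationOn.continuousOn_variationOnFromTo {α E : Type*} [LinearOrder α]
    [TopologicalSpace α] [OrderTopology α] [PseudoEMetricSpace E] {f : α → E} {s : Set α}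
    (hf : BoundedVariationOn f s) (hc : ContinuousOn f s) {a : α} (ha : a ∈ s) :
    ContinuousOn (variationOnFromTo f s a) s := by
  intro x hx
  have hsplit : ∀ y ∈ s, variationOnFromTo f s a y = variationOnFromTo f s a x +
      ((eVariationOn f (s ∩ Icc x y)).toReal - (eVariationOn f (s ∩ Icc y x)).toReal) := by
    intro y hy
    rw [← variationOnFromTo.add hf.locallyBoundedVariationOn ha hx hy]
    rcases le_total x y with hxy | hyx
    · rw [variationOnFromTo.eq_of_le _ _ hxy, eVariationOn.subsingleton f
        ((subsingleton_Icc_of_ge hxy).anti inter_subset_right), ENNReal.toReal_zero, sub_zero]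
    · rw [variationOnFromTo.eq_of_ge _ _ hyx, eVariationOn.subsingleton f
        ((subsingleton_Icc_of_ge hyx).anti inter_subset_right), ENNReal.toReal_zero, zero_sub]
  have hright := (ENNReal.tendsto_toReal ENNReal.zero_ne_top).comp
    (hf.tendsto_eVariationOn_Icc_zero_right x ((hc x hx).mono inter_subset_left))
  have hleft := (ENNReal.tendsto_toReal ENNReal.zero_ne_top).comp
    (hf.tendsto_eVariationOn_Icc_zero_left ((hc x hx).mono inter_subset_left))
  have := tendsto_const_nhds (x := variationOnFromTo f s a x) |>.add (hright.sub hleft)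
  simp only [ENNReal.toReal_zero, sub_zero, add_zero] at this
  exact this.congr' (eventually_nhdsWithin_of_forall fun y hy => (hsplit y hy).symm)

theorem BoundedVariationOn.variationOnFromTo_image_Icc {E : Type*} [PseudoEMetricSpace E]
    {f : ℝ → E} {a b : ℝ} (hab : a ≤ b) (hf : BoundedVariationOn f (Icc a b))
    (hc : ContinuousOn f (Icc a b)) :
    variationOnFromTo f (Icc a b) a '' Icc a b = Icc 0 (eVariationOn f (Icc a b)).toReal := by
  have ha : a ∈ Icc a b := left_mem_Icc.2 hab
  have hb : b ∈ Icc a b := right_mem_Icc.2 hab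
  have hmono := variationOnFromTo.monotoneOn hf.locallyBoundedVariationOn ha
  have h₀ : variationOnFromTo f (Icc a b) a a = 0 := variationOnFromTo.self _ _ _
  have h₁ : variationOnFromTo f (Icc a b) a b = (eVariationOn f (Icc a b)).toReal := by
    rw [variationOnFromTo.eq_of_le _ _ hab, inter_self]
  refine Subset.antisymm ?_ ?_
  · rintro _ ⟨t, ht, rfl⟩
    exact ⟨h₀ ▸ hmono ha ht ht.1, h₁ ▸ hmono ht hb ht.2⟩
  · simpa only [h₀, h₁] using intermediate_value_Icc hab (hf.continuousOn_variationOnFromTo hc ha)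

theorem LipschitzOnWith.setLIntegral_image_le {s : Set ℝ} (hs : MeasurableSet s) {φ : ℝ → ℝ}
    {C : ℝ≥0} (hφ : LipschitzOnWith C φ s) {F : ℝ → ℝ≥0∞} (hF : Measurable F) :
    ∫⁻ y in φ '' s, F y ≤ C * ∫⁻ x in s, F (φ x) := by
  obtain ⟨ψ, hψ, hφψ⟩ := hφ.extend_real
  have hψm : Measurable ψ := hψ.continuous.measurable
  have hle : volume.restrict (φ '' s) ≤ ((C : ℝ≥0∞) • volume.restrict s).map ψ := by
    refine Measure.le_iff.2 fun A hA => ?_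
    rw [Measure.restrict_apply hA, Measure.map_apply hψm hA, Measure.smul_apply, smul_eq_mul,
      Measure.restrict_apply (hψm hA)]
    have himage : A ∩ φ '' s ⊆ φ '' (ψ ⁻¹' A ∩ s) := by
      rintro _ ⟨hyA, x, hx, rfl⟩
      exact ⟨x, ⟨by rwa [mem_preimage, ← hφψ hx], hx⟩, rfl⟩
    calc volume (A ∩ φ '' s) ≤ volume (φ '' (ψ ⁻¹' A ∩ s)) := measure_mono himage
      _ ≤ C * volume (ψ ⁻¹' A ∩ s) := by
        simpa [hausdorffMeasure_real] using
          (hφ.mono inter_subset_right).hausdorffMeasure_image_le zero_le_one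
  calc ∫⁻ y in φ '' s, F y ≤ ∫⁻ y, F y ∂((C : ℝ≥0∞) • volume.restrict s).map ψ :=
        lintegral_mono' hle le_rfl
    _ = C * ∫⁻ x in s, F (ψ x) := by rw [lintegral_map hF hψm, lintegral_smul_measure, smul_eq_mul]
    _ = C * ∫⁻ x in s, F (φ x) := by
        rw [setLIntegral_congr_fun hs fun x hx => by rw [← hφψ hx]]

theorem LowerSemicontinuous.exists_measurable_eqOn_comp {X : Type*} [TopologicalSpace X]
    {g : X → ℝ≥0∞} (hg : LowerSemicontinuous g) {f : ℝ → X} {a b : ℝ} (hab : a ≤ b)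
    (hf : ContinuousOn f (Icc a b)) : ∃ F : ℝ → ℝ≥0∞, Measurable F ∧ EqOn F (g ∘ f) (Icc a b) :=
  ⟨fun t => g (f (projIcc a b hab t)),
    (hg.comp (hf.comp_continuous (continuous_subtype_val.comp continuous_projIcc)
      fun t => (projIcc a b hab t).2)).measurable,
    fun t ht => by simp [projIcc_of_mem hab ht]⟩

theorem setLIntegral_comp_le_liminf_of_tendsto {ι X : Type*} [TopologicalSpace X] {l : Filter ι}
    [l.IsCountablyGenerated] {fs : ι → ℝ → X} {f : ℝ → X} {a b : ℝ} (hab : a ≤ b)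
    (hfs : ∀ i, ContinuousOn (fs i) (Icc a b)) (hlim : ∀ t ∈ Icc a b, Tendsto (fs · t) l (𝓝 (f t)))
    {g : X → ℝ≥0∞} (hg : LowerSemicontinuous g) :
    ∫⁻ t in Icc a b, g (f t) ≤ l.liminf fun i => ∫⁻ t in Icc a b, g (fs i t) :=
  calc ∫⁻ t in Icc a b, g (f t) ≤ ∫⁻ t in Icc a b, l.liminf fun i => g (fs i t) :=
        setLIntegral_mono' measurableSet_Icc fun t ht =>
          (hg.le_liminf (f t)).trans (hlim t ht).liminf_le_liminf_comp
    _ ≤ _ := lintegral_liminf_le' fun i => by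
        obtain ⟨F, hFm, hF⟩ := hg.exists_measurable_eqOn_comp hab (hfs i)
        exact hFm.aemeasurable.congr ((ae_restrict_iff' measurableSet_Icc).2 (ae_of_all _ hF))

theorem LowerSemicontinuousOn.eqOn_zero_of_setLIntegral_Icc_eq_zero {F : ℝ → ℝ≥0∞} {a b : ℝ}
    (hab : a < b) (hF : LowerSemicontinuousOn F (Icc a b)) (h : ∫⁻ t in Icc a b, F t = 0) :
    EqOn F 0 (Icc a b) := by
  intro t ht
  by_contra hne
  obtain ⟨c, hc, hcF⟩ := exists_between (pos_iff_ne_zero.2 hne)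
  obtain ⟨V, hVo, htV, hV⟩ := mem_nhdsWithin.1 (hF t ht c hcF)
  have hUo : IsOpen (V ∩ Ioo a b) := hVo.inter isOpen_Ioo
  have hU : (V ∩ Ioo a b).Nonempty :=
    mem_closure_iff.1 (by rwa [closure_Ioo hab.ne]) V hVo htV
  have hpos : 0 < c * volume (V ∩ Ioo a b) := mul_pos hc.ne' (hUo.measure_pos volume hU).ne'
  have hle : c * volume (V ∩ Ioo a b) ≤ ∫⁻ t in Icc a b, F t :=
    calc c * volume (V ∩ Ioo a b) = ∫⁻ _ in V ∩ Ioo a b, c := (setLIntegral_const _ _).symm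
      _ ≤ ∫⁻ t in V ∩ Ioo a b, F t := setLIntegral_mono' hUo.measurableSet fun x hx =>
          (hV ⟨hx.1, Ioo_subset_Icc_self hx.2⟩).le
      _ ≤ ∫⁻ t in Icc a b, F t := lintegral_mono_set (inter_subset_right.trans Ioo_subset_Icc_self)
  exact hpos.ne' (le_zero_iff.1 (h ▸ hle))

theorem lipschitzOnWith_liminf_of_tendsto {ι α β : Type*} [PseudoMetricSpace α]
    [PseudoEMetricSpace β] {l : Filter ι} [l.NeBot] {F : ι → α → β} {f : α → β} {s : Set α}
    {K : ι → ℝ≥0} (hF : ∀ i, LipschitzOnWith (K i) (F i) s)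
    (hf : ∀ x ∈ s, Tendsto (F · x) l (𝓝 (f x))) (hK : l.liminf (fun i => (K i : ℝ≥0∞)) ≠ ⊤) :
    LipschitzOnWith (l.liminf fun i => (K i : ℝ≥0∞)).toNNReal f s := by
  intro x hx y hy
  rw [coe_toNNReal hK]
  calc edist (f x) (f y) = l.liminf fun i => edist (F i x) (F i y) :=
        ((hf x hx).edist (hf y hy)).liminf_eq.symm
    _ ≤ l.liminf fun i => K i * edist x y :=
        liminf_le_liminf (Eventually.of_forall fun i => hF i hx hy)
    _ = (l.liminf fun i => (K i : ℝ≥0∞)) * edist x y := by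
        rw [ENNReal.liminf_mul_const_of_ne_top (edist_ne_top x y), mul_comm]

section Curves

variable {X : Type*} [MetricSpace X]

theorem naturalParameterization_variationOnFromTo {f : ℝ → X} {s : Set ℝ}
    (hf : LocallyBoundedVariationOn f s) {a b : ℝ} (ha : a ∈ s) (hb : b ∈ s) :
    naturalParameterization f s a (variationOnFromTo f s a b) = f b :=
  edist_eq_zero.1 (edist_naturalParameterization_eq_zero hf ha hb)

theorem pathIntegral_eq_curveLen_mul {c : ℝ → X} (hc : IsRectCurve c) (hspeed : IsConstSpeed c)
    (g : X → ℝ≥0∞) : pathIntegral g c = curveLen c * ∫⁻ t in Icc (0 : ℝ) 1, g (c t) := by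
  set ℓ := (curveLen c).toReal
  have hℓ : 0 ≤ ℓ := toReal_nonneg
  obtain ⟨hbv, hσ⟩ := hasConstantSpeedOnWith_iff_variationOnFromTo_eq.1 hspeed
  have hnat : ∀ t ∈ Icc (0 : ℝ) 1, naturalParameterization c (Icc 0 1) 0 (ℓ * t) = c t := by
    intro t ht
    have := naturalParameterization_variationOnFromTo hbv (left_mem_Icc.2 zero_le_one) ht
    rwa [hσ (left_mem_Icc.2 zero_le_one) ht, sub_zero, coe_toNNReal_eq_toReal] at this
  calc pathIntegral g c
        = ∫⁻ s in (ℓ * ·) '' Icc 0 1, g (naturalParameterization c (Icc 0 1) 0 s) := by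
        rw [image_mul_left_Icc hℓ zero_le_one, mul_zero, mul_one]; rfl
    _ = ∫⁻ t in Icc 0 1, ENNReal.ofReal ℓ * g (naturalParameterization c (Icc 0 1) 0 (ℓ * t)) :=
        lintegral_image_eq_lintegral_deriv_mul_of_monotoneOn measurableSet_Icc
          (fun t _ => ((hasDerivAt_id t).const_mul ℓ).hasDerivWithinAt.congr_deriv (mul_one ℓ))
          (fun _ _ _ _ h => mul_le_mul_of_nonneg_left h hℓ) _
    _ = curveLen c * ∫⁻ t in Icc (0 : ℝ) 1, g (c t) := by
        rw [lintegral_const_mul' _ _ ofReal_ne_top, ofReal_toReal hc.2.ne,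
          setLIntegral_congr_fun measurableSet_Icc fun t ht => by rw [hnat t ht]]

theorem pathIntegral_le_mul_of_lipschitzOnWith {γ : ℝ → X} {C : ℝ≥0}
    (hγ : LipschitzOnWith C γ (Icc 0 1)) {g : X → ℝ≥0∞} (hg : LowerSemicontinuous g) :
    pathIntegral g γ ≤ C * ∫⁻ t in Icc (0 : ℝ) 1, g (γ t) := by
  set σ := variationOnFromTo γ (Icc 0 1) 0
  have h0 : (0 : ℝ) ∈ Icc (0 : ℝ) 1 := left_mem_Icc.2 zero_le_one
  have hbv : BoundedVariationOn γ (Icc 0 1) := by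
    have := hγ.eVariationOn_inter_Icc_le h0 (right_mem_Icc.2 zero_le_one)
    rw [inter_self] at this
    exact ne_top_of_le_ne_top (mul_ne_top coe_ne_top ofReal_ne_top) this
  have himage : σ '' Icc 0 1 = Icc 0 (curveLen γ).toReal :=
    hbv.variationOnFromTo_image_Icc zero_le_one hγ.continuousOn
  have hnat : ContinuousOn (naturalParameterization γ (Icc 0 1) 0) (Icc 0 (curveLen γ).toReal) := by
    rw [← himage]
    exact (has_unit_speed_naturalParameterization γ hbv.locallyBoundedVariationOn h0)
      |>.lipschitzOnWith.continuousOn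
  obtain ⟨F, hFm, hF⟩ := hg.exists_measurable_eqOn_comp toReal_nonneg hnat
  calc pathIntegral g γ = ∫⁻ s in σ '' Icc 0 1, F s := by
        rw [himage]
        exact setLIntegral_congr_fun measurableSet_Icc fun s hs => (hF hs).symm
    _ ≤ C * ∫⁻ t in Icc 0 1, F (σ t) :=
        (hγ.lipschitzOnWith_variationOnFromTo h0).setLIntegral_image_le measurableSet_Icc hFm
    _ = C * ∫⁻ t in Icc 0 1, g (γ t) := by
        rw [setLIntegral_congr_fun measurableSet_Icc fun t ht => ?_]
        rw [hF (himage ▸ mem_image_of_mem σ ht), Function.comp_apply,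
          naturalParameterization_variationOnFromTo hbv.locallyBoundedVariationOn h0 ht]

theorem pathIntegral_eq_zero_of_setLIntegral_eq_zero {γ : ℝ → X} (hγ : IsCurve γ)
    {g : X → ℝ≥0∞} (hg : LowerSemicontinuous g) (h : ∫⁻ t in Icc (0 : ℝ) 1, g (γ t) = 0) :
    pathIntegral g γ = 0 := by
  have hzero : EqOn (g ∘ γ) 0 (Icc 0 1) :=
    ((hg.lowerSemicontinuousOn univ).comp hγ (mapsTo_univ _ _))
      |>.eqOn_zero_of_setLIntegral_Icc_eq_zero zero_lt_one h
  rcases eq_or_ne (curveLen γ) ⊤ with hinf | hfin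
  · -- junk value: `(⊤ : ℝ≥0∞).toReal = 0`, so the path integral is over `Icc 0 0`
    simp [pathIntegral, hinf]
  have hbv : BoundedVariationOn γ (Icc 0 1) := hfin
  have himage := BoundedVariationOn.variationOnFromTo_image_Icc zero_le_one hbv hγ
  refine (setLIntegral_congr_fun measurableSet_Icc fun s hs => ?_).trans lintegral_zero
  rw [curveLen, ← himage] at hs
  obtain ⟨t, ht, rfl⟩ := hs
  rw [naturalParameterization_variationOnFromTo hbv.locallyBoundedVariationOn
    (left_mem_Icc.2 zero_le_one) ht]
  exact hzero ht

end Curves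

theorem stmt1_general {X : Type*} [MetricSpace X]
    (γs : ℕ → ℝ → X) (γ : ℝ → X)
    (hcurve : ∀ i, IsRectCurve (γs i)) (hspeed : ∀ i, IsConstSpeed (γs i))
    (hγ : IsCurve γ)
    (hconv : TendstoUniformlyOn γs γ Filter.atTop (Set.Icc 0 1))
    (g : X → ℝ≥0∞) (hg : LowerSemicontinuous g) :
    pathIntegral g γ ≤ Filter.atTop.liminf (fun i => pathIntegral g (γs i)) := by
  set L₀ := atTop.liminf fun i => curveLen (γs i)
  set A := ∫⁻ t in Icc (0 : ℝ) 1, g (γ t)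
  have hA : A ≤ atTop.liminf fun i => ∫⁻ t in Icc (0 : ℝ) 1, g (γs i t) :=
    setLIntegral_comp_le_liminf_of_tendsto zero_le_one (fun i => (hcurve i).1)
      (fun t ht => hconv.tendsto_at ht) hg
  have hL₀A : L₀ * A ≤ atTop.liminf fun i => pathIntegral g (γs i) := by
    simp_rw [pathIntegral_eq_curveLen_mul (hcurve _) (hspeed _)]
    exact (mul_le_mul_right hA _).trans ENNReal.le_liminf_mul
  rcases eq_or_ne L₀ ⊤ with hL₀ | hL₀
  · rcases eq_or_ne A 0 with hA₀ | hA₀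
    · rw [pathIntegral_eq_zero_of_setLIntegral_eq_zero hγ hg hA₀]
      exact zero_le
    · rw [hL₀, top_mul hA₀] at hL₀A
      exact le_top.trans hL₀A
  have hK : (fun i => ((curveLen (γs i)).toNNReal : ℝ≥0∞)) = fun i => curveLen (γs i) :=
    funext fun i => coe_toNNReal (hcurve i).2.ne
  have hlip := lipschitzOnWith_liminf_of_tendsto (fun i => (hspeed i).lipschitzOnWith)
    (fun t ht => hconv.tendsto_at ht) (by rwa [hK])
  rw [hK] at hlip
  calc pathIntegral g γ ≤ L₀.toNNReal * A := pathIntegral_le_mul_of_lipschitzOnWith hlip hg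
    _ = L₀ * A := by rw [coe_toNNReal hL₀]
    _ ≤ _ := hL₀A

/-- lower semicontinuity of path integrals under uniform convergence. -/
theorem stmt1 {X : Type*} [MetricSpace X]
    (γs : ℕ → ℝ → X) (γ : ℝ → X) (L : ℝ≥0∞)
    (hcurve : ∀ i, IsRectCurve (γs i)) (hspeed : ∀ i, IsConstSpeed (γs i))
    (hlen : ∀ i, curveLen (γs i) ≤ L)
    (hγ : IsCurve γ)
    (hconv : TendstoUniformlyOn γs γ Filter.atTop (Set.Icc 0 1))
    (g : X → ℝ≥0∞) (hg : LowerSemicontinuous g) :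
    pathIntegral g γ ≤ Filter.atTop.liminf (fun i => pathIntegral g (γs i)) :=
  stmt1_general γs γ hcurve hspeed hγ hconv g hg
end

section
/- In the setting of the discrete-path infimum construction: let δ > 0, E ⊂ X non-empty, g:X→[0,∞) continuous, h:E→ℝ bounded, M > 0, and f(y) = min(inf_P {h(p_0) + ∑ g(p_k)d(p_k,p_{k+1})}, M) over discrete paths from E to y with Mesh ≤ δ. Then for all x, y ∈ X with d(x,y) ≤ δ, one has |f(x) − f(y)| ≤ max(g(x), g(y))·d(x,y). -/
open MeasureTheory Metric Set ENNReal NNReal Filter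

/-!
Let `f` be the discrete-path infimum function. If `d(x, y) ≤ δ`, every admissible path to `y`
yields an admissible path to `x` costing at most `g(y) d(x, y)` more: either it already passes
through `x`, and its truncation there is no more expensive since `g ≥ 0`, or one more step of
length `d(x, y) ≤ δ` reaches `x`. Since also `f(x) ≤ M`, this gives `f(x) ≤ f(y) + g(y) d(x, y)`,
and exchanging `x` and `y` gives the estimate.
-/

theorem update_succ_apply_of_le {α : Type*} {p : ℕ → α} {n k : ℕ} {x : α} (hk : k ≤ n) :
    Function.update p (n + 1) x k = p k :=
  Function.update_of_ne (by omega) _ _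

section DiscretePath

variable {X : Type*} [MetricSpace X] {E : Set X} {δ M : ℝ} {g h : X → ℝ}

theorem dPathVal_mono (hg0 : ∀ x, 0 ≤ g x) (p : ℕ → X) {k n : ℕ} (hkn : k ≤ n) :
    dPathVal g h k p ≤ dPathVal g h n p :=
  add_le_add_right (Finset.sum_le_sum_of_subset_of_nonneg (Finset.range_subset_range.mpr hkn)
    fun _ _ _ => mul_nonneg (hg0 _) dist_nonneg) _

theorem dPathVal_update_succ (p : ℕ → X) (n : ℕ) (x : X) :
    dPathVal g h (n + 1) (Function.update p (n + 1) x) =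
      dPathVal g h n p + g (p n) * dist (p n) x := by
  have hlow : ∀ k ≤ n, Function.update p (n + 1) x k = p k := fun _ =>
    update_succ_apply_of_le
  have hsum : ∀ k ∈ Finset.range n,
      g (Function.update p (n + 1) x k) *
          dist (Function.update p (n + 1) x k) (Function.update p (n + 1) x (k + 1)) =
        g (p k) * dist (p k) (p (k + 1)) := fun k hk => by
    rw [Finset.mem_range] at hk
    rw [hlow k hk.le, hlow (k + 1) hk]
  simp only [dPathVal, Finset.sum_range_succ, Finset.sum_congr rfl hsum, hlow 0 n.zero_le,
    hlow n le_rfl, Function.update_self]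
  ring

theorem dAdm.truncate {y : X} {n : ℕ} {p : ℕ → X} (hp : dAdm E δ y n p) {k : ℕ} (hkn : k ≤ n) :
    dAdm E δ (p k) k p :=
  ⟨hp.1, rfl, fun a ha b hb hab => hp.2.2.1 a (ha.trans hkn) b (hb.trans hkn) hab,
    fun j hj => hp.2.2.2 j (hj.trans_le hkn)⟩

theorem dAdm.update_succ {x y : X} {n : ℕ} {p : ℕ → X} (hp : dAdm E δ y n p)
    (hx : ∀ k ≤ n, p k ≠ x) (hxy : dist y x ≤ δ) :
    dAdm E δ x (n + 1) (Function.update p (n + 1) x) := by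
  obtain ⟨hp0, hpn, hinj, hmesh⟩ := hp
  have hlow : ∀ k ≤ n, Function.update p (n + 1) x k = p k := fun _ =>
    update_succ_apply_of_le
  refine ⟨by rwa [hlow 0 n.zero_le], Function.update_self _ _ _, ?_, ?_⟩
  · intro a ha b hb hab
    rcases (Nat.le_succ_iff.mp ha).symm, (Nat.le_succ_iff.mp hb).symm with
      ⟨rfl | ha, rfl | hb⟩
    · rfl
    · rw [Function.update_self, hlow b hb] at hab
      exact absurd hab.symm (hx b hb)
    · rw [Function.update_self, hlow a ha] at hab
      exact absurd hab (hx a ha)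
    · rw [hlow a ha, hlow b hb] at hab
      exact hinj a ha b hb hab
  · intro j hj
    rcases (Nat.lt_succ_iff.mp hj).lt_or_eq with hj | rfl
    · rw [hlow j hj.le, hlow (j + 1) hj]
      exact hmesh j hj
    · rwa [hlow j le_rfl, Function.update_self, hpn]

theorem dAdm.exists_of_dist_le (hg0 : ∀ x, 0 ≤ g x) {x y : X} (hxy : dist x y ≤ δ) {n : ℕ}
    {p : ℕ → X} (hp : dAdm E δ y n p) :
    ∃ (m : ℕ) (q : ℕ → X), dAdm E δ x m q ∧
      dPathVal g h m q ≤ dPathVal g h n p + g y * dist x y := by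
  have hcost : 0 ≤ g y * dist x y := mul_nonneg (hg0 y) dist_nonneg
  by_cases hx : ∃ k ≤ n, p k = x
  · obtain ⟨k, hkn, rfl⟩ := hx
    exact ⟨k, p, dAdm.truncate hp hkn,
      (dPathVal_mono hg0 p hkn).trans (le_add_of_nonneg_right hcost)⟩
  · push Not at hx
    refine ⟨n + 1, _, dAdm.update_succ hp hx (by rwa [dist_comm]), ?_⟩
    rw [dPathVal_update_succ, hp.2.1, dist_comm]

theorem bddBelow_dPathVal (hg0 : ∀ x, 0 ≤ g x) {C : ℝ} (hC : ∀ x ∈ E, C ≤ h x) (y : X) :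
    BddBelow
      (insert M {v : ℝ | ∃ (n : ℕ) (p : ℕ → X), dAdm E δ y n p ∧ v = dPathVal g h n p}) := by
  refine ⟨min M C, ?_⟩
  rintro v (rfl | ⟨n, p, hp, rfl⟩)
  · exact min_le_left _ _
  · exact (min_le_right _ _).trans ((hC _ hp.1).trans
      (le_add_of_nonneg_right (Finset.sum_nonneg fun _ _ => mul_nonneg (hg0 _) dist_nonneg)))

theorem dInfFun_le_add (hg0 : ∀ x, 0 ≤ g x) {C : ℝ} (hC : ∀ x ∈ E, C ≤ h x) {x y : X}
    (hxy : dist x y ≤ δ) :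
    dInfFun E δ M g h x ≤ dInfFun E δ M g h y + g y * dist x y := by
  have hcost : 0 ≤ g y * dist x y := mul_nonneg (hg0 y) dist_nonneg
  rw [← sub_le_iff_le_add]
  refine le_csInf (Set.insert_nonempty _ _) ?_
  rintro v (rfl | ⟨n, p, hp, rfl⟩)
  · rw [sub_le_iff_le_add]
    exact (csInf_le (bddBelow_dPathVal hg0 hC x) (Set.mem_insert _ _)).trans
      (le_add_of_nonneg_right hcost)
  · obtain ⟨m, q, hq, hval⟩ := dAdm.exists_of_dist_le (h := h) hg0 hxy hp
    rw [sub_le_iff_le_add]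
    exact (csInf_le (bddBelow_dPathVal hg0 hC x) (Set.mem_insert_of_mem _ ⟨m, q, hq, rfl⟩)).trans
      hval

end DiscretePath

theorem stmt7_general {X : Type*} [MetricSpace X]
    (E : Set X) (delta M : ℝ)
    (g : X → ℝ) (hg0 : ∀ x, 0 ≤ g x)
    (h : X → ℝ) (hb : ∃ C : ℝ, ∀ x ∈ E, |h x| ≤ C) :
    ∀ x y : X, dist x y ≤ delta →
      |dInfFun E delta M g h x - dInfFun E delta M g h y| ≤
        max (g x) (g y) * dist x y := by
  obtain ⟨C, hC⟩ := hb
  have hC' : ∀ x ∈ E, -C ≤ h x := fun x hx => neg_le_of_abs_le (hC x hx)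
  intro x y hxy
  have hfx := dInfFun_le_add (M := M) hg0 hC' hxy
  have hfy := dInfFun_le_add (M := M) hg0 hC' ((dist_comm y x).trans_le hxy)
  rw [dist_comm y x] at hfy
  have hd : 0 ≤ dist x y := dist_nonneg
  have hgx := mul_le_mul_of_nonneg_right (le_max_left (g x) (g y)) hd
  have hgy := mul_le_mul_of_nonneg_right (le_max_right (g x) (g y)) hd
  rw [abs_sub_le_iff]
  constructor <;> linarith

/-- the discrete-path infimum function satisfies the two-point estimate
`|f(x) − f(y)| ≤ max(g(x), g(y))·d(x,y)` whenever `d(x,y) ≤ δ`. -/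
theorem stmt7 {X : Type*} [MetricSpace X]
    (E : Set X) (hE : E.Nonempty) (delta M : ℝ) (hdelta : 0 < delta) (hM : 0 < M)
    (g : X → ℝ) (hgc : Continuous g) (hg0 : ∀ x, 0 ≤ g x)
    (h : X → ℝ) (hb : ∃ C : ℝ, ∀ x ∈ E, |h x| ≤ C) :
    ∀ x y : X, dist x y ≤ delta →
      |dInfFun E delta M g h x - dInfFun E delta M g h y| ≤
        max (g x) (g y) * dist x y :=
  stmt7_general E delta M g hg0 h hb
end
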